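/- Let Ω ⊂ ℝ^N (N ≥ 2) be an open bounded set with C^{1,γ} boundary (0 < γ < 1) and let 1 < p < ∞. Then T_p(Ω) · λ_p^D(Ω)^{1/(p−1)} ≤ |Ω| (Pólya-type inequality). -/

import Mathlib

open MeasureTheory Metric Set Filter
open scoped Topology ENNReal NNReal

noncomputable section

/-- The `(N-1)`-dimensional Hausdorff measure on `ℝ^N`, used as boundary measure. -/
def bdry (N : ℕ) : Measure (EuclideanSpace ℝ (Fin N)) :=
  MeasureTheory.Measure.hausdorffMeasure ((N : ℝ) - 1)

/-- The perimeter `P(Ω) = H^{N-1}(∂Ω)`. -/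
def perim (N : ℕ) (Ω : Set (EuclideanSpace ℝ (Fin N))) : ℝ :=
  (bdry N (frontier Ω)).toReal

/-- The Lebesgue measure `|Ω|` as a real number. -/
def vol (N : ℕ) (Ω : Set (EuclideanSpace ℝ (Fin N))) : ℝ :=
  (MeasureTheory.volume Ω).toReal

/-- `w` is of class `C^1` on the closure of `Ω`. -/
def C1Cl (N : ℕ) (Ω : Set (EuclideanSpace ℝ (Fin N)))
    (w : EuclideanSpace ℝ (Fin N) → ℝ) : Prop :=
  ContDiffOn ℝ 1 w (closure Ω)

/-- `φ ∈ C_c^∞(Ω)`: smooth, compactly supported, with support contained in `Ω`. -/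
def CcInf (N : ℕ) (Ω : Set (EuclideanSpace ℝ (Fin N)))
    (φ : EuclideanSpace ℝ (Fin N) → ℝ) : Prop :=
  ContDiff ℝ (⊤ : ℕ∞) φ ∧ HasCompactSupport φ ∧ tsupport φ ⊆ Ω

/-- The first Robin eigenvalue `λ_p(β,Ω)` of the `p`-Laplacian, as the infimum of the
Rayleigh quotient over functions of class `C^1` on the closure of `Ω`, not identically zero. -/
def robinEig (N : ℕ) (p β : ℝ) (Ω : Set (EuclideanSpace ℝ (Fin N))) : ℝ :=
  sInf {r : ℝ | ∃ w : EuclideanSpace ℝ (Fin N) → ℝ, C1Cl N Ω w ∧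
    (0 < ∫ x in Ω, |w x| ^ p) ∧
    r = ((∫ x in Ω, ‖gradient w x‖ ^ p) +
          β * ∫ x in frontier Ω, |w x| ^ p ∂(bdry N)) / ∫ x in Ω, |w x| ^ p}

/-- The first Dirichlet eigenvalue `λ_p^D(Ω)` of the `p`-Laplacian. -/
def dirichletEig (N : ℕ) (p : ℝ) (Ω : Set (EuclideanSpace ℝ (Fin N))) : ℝ :=
  sInf {r : ℝ | ∃ φ : EuclideanSpace ℝ (Fin N) → ℝ, CcInf N Ω φ ∧
    (0 < ∫ x in Ω, |φ x| ^ p) ∧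
    r = (∫ x in Ω, ‖gradient φ x‖ ^ p) / ∫ x in Ω, |φ x| ^ p}

/-- The `p`-torsional rigidity `T_p(Ω)`. -/
def pTorsion (N : ℕ) (p : ℝ) (Ω : Set (EuclideanSpace ℝ (Fin N))) : ℝ :=
  (sSup {r : ℝ | ∃ φ : EuclideanSpace ℝ (Fin N) → ℝ, CcInf N Ω φ ∧ (∃ x, φ x ≠ 0) ∧
    r = (∫ x in Ω, |φ x|) ^ p / ∫ x in Ω, ‖gradient φ x‖ ^ p}) ^ ((1 : ℝ) / (p - 1))

/-- `Ω` has Lipschitz boundary: near every boundary point, up to a rotation,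
`Ω` is the open region above the graph of a Lipschitz function. -/
def HasLipschitzBoundary (N : ℕ) (Ω : Set (EuclideanSpace ℝ (Fin N))) : Prop :=
  ∀ x ∈ frontier Ω, ∃ r : ℝ, 0 < r ∧
    ∃ (e : EuclideanSpace ℝ (Fin N) ≃ₗᵢ[ℝ] EuclideanSpace ℝ (Fin (N - 1 + 1)))
      (g : EuclideanSpace ℝ (Fin (N - 1)) → ℝ) (L : NNReal), LipschitzWith L g ∧
      Ω ∩ ball x r =
        {y ∈ ball x r | g (WithLp.toLp 2 (fun i : Fin (N - 1) => e y i.castSucc)) < e y (Fin.last (N - 1))}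

/-- `Ω` has `C^{1,γ}` boundary: near every boundary point, up to a rotation,
`Ω` is the open region above the graph of a `C^1` function whose differential is
`γ`-Hölder continuous. -/
def HasC1GammaBoundary (N : ℕ) (γ : ℝ) (Ω : Set (EuclideanSpace ℝ (Fin N))) : Prop :=
  ∀ x ∈ frontier Ω, ∃ r : ℝ, 0 < r ∧
    ∃ (e : EuclideanSpace ℝ (Fin N) ≃ₗᵢ[ℝ] EuclideanSpace ℝ (Fin (N - 1 + 1)))
      (g : EuclideanSpace ℝ (Fin (N - 1)) → ℝ), ContDiff ℝ 1 g ∧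
      (∃ C : ℝ, ∀ a b, ‖fderiv ℝ g a - fderiv ℝ g b‖ ≤ C * ‖a - b‖ ^ γ) ∧
      Ω ∩ ball x r =
        {y ∈ ball x r | g (WithLp.toLp 2 (fun i : Fin (N - 1) => e y i.castSucc)) < e y (Fin.last (N - 1))}

/-- `f ∈ L^∞(Ω)`: `f` is measurable and bounded on `Ω`. -/
def MemLinfty (N : ℕ) (Ω : Set (EuclideanSpace ℝ (Fin N)))
    (f : EuclideanSpace ℝ (Fin N) → ℝ) : Prop :=
  Measurable f ∧ ∃ M : ℝ, ∀ x ∈ Ω, |f x| ≤ M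

/-- `f` is not identically zero (as an element of a Lebesgue space on `Ω`). -/
def NotAEZero (N : ℕ) (Ω : Set (EuclideanSpace ℝ (Fin N)))
    (f : EuclideanSpace ℝ (Fin N) → ℝ) : Prop :=
  ¬ (∀ᵐ x ∂(MeasureTheory.volume.restrict Ω), f x = 0)

/-- `u` is a weak solution of the Robin problem `-Δ_p u = f` in `Ω`,
`|∇u|^{p-2} ∂u/∂ν + β |u|^{p-2} u = 0` on `∂Ω`. -/
def IsRobinSolution (N : ℕ) (p β : ℝ) (Ω : Set (EuclideanSpace ℝ (Fin N)))
    (f u : EuclideanSpace ℝ (Fin N) → ℝ) : Prop :=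
  C1Cl N Ω u ∧
  ∀ φ : EuclideanSpace ℝ (Fin N) → ℝ, C1Cl N Ω φ →
    (∫ x in Ω, ‖gradient u x‖ ^ (p - 2) * (inner ℝ (gradient u x) (gradient φ x) : ℝ)) +
      β * ∫ x in frontier Ω, |u x| ^ (p - 2) * u x * φ x ∂(bdry N) =
    ∫ x in Ω, f x * φ x

/-- `u` is a weak solution of the Dirichlet problem `-Δ_p u = f` in `Ω`, `u = 0` on `∂Ω`. -/
def IsDirichletSolution (N : ℕ) (p : ℝ) (Ω : Set (EuclideanSpace ℝ (Fin N)))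
    (f u : EuclideanSpace ℝ (Fin N) → ℝ) : Prop :=
  ContDiffOn ℝ 1 u Ω ∧ ContinuousOn u (closure Ω) ∧ (∀ x ∈ frontier Ω, u x = 0) ∧
  IntegrableOn (fun x => ‖gradient u x‖ ^ p) Ω ∧
  ∀ φ : EuclideanSpace ℝ (Fin N) → ℝ, CcInf N Ω φ →
    (∫ x in Ω, ‖gradient u x‖ ^ (p - 2) * (inner ℝ (gradient u x) (gradient φ x) : ℝ)) =
    ∫ x in Ω, f x * φ x

/-- `v` is a weak solution of `-Δ_p v = f` in `Ω`, `|∇v|^{p-2} ∂v/∂ν = -K^{p-1}` on `∂Ω`,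
with vanishing mean on `∂Ω`, where `K = ((1/P(Ω)) ∫_Ω f)^{1/(p-1)}`. -/
def IsNeumannKSolution (N : ℕ) (p : ℝ) (Ω : Set (EuclideanSpace ℝ (Fin N)))
    (f v : EuclideanSpace ℝ (Fin N) → ℝ) : Prop :=
  C1Cl N Ω v ∧ (∫ x in frontier Ω, v x ∂(bdry N)) = 0 ∧
  ∀ φ : EuclideanSpace ℝ (Fin N) → ℝ, C1Cl N Ω φ →
    (∫ x in Ω, ‖gradient v x‖ ^ (p - 2) * (inner ℝ (gradient v x) (gradient φ x) : ℝ)) +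
      ((((1 / perim N Ω) * ∫ x in Ω, f x) ^ ((1 : ℝ) / (p - 1))) ^ (p - 1)) *
        ∫ x in frontier Ω, φ x ∂(bdry N) =
    ∫ x in Ω, f x * φ x

/-- The quantity `ν_p`. -/
def nuP (N : ℕ) (p : ℝ) (Ω : Set (EuclideanSpace ℝ (Fin N))) : ℝ :=
  sInf {r : ℝ | ∃ f v : EuclideanSpace ℝ (Fin N) → ℝ,
    MemLinfty N Ω f ∧ (∀ x ∈ Ω, 0 ≤ f x) ∧ NotAEZero N Ω f ∧
    IsNeumannKSolution N p Ω f v ∧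
    r = (∫ x in Ω, f x ^ (p / (p - 1))) / ∫ x in Ω, ‖gradient v x‖ ^ p}

/-!
Hölder's inequality gives `(∫_Ω |φ|)^p ≤ |Ω|^(p-1) ∫_Ω |φ|^p`, and the variational definition of
`λ_p^D(Ω)` gives `λ_p^D(Ω) ∫_Ω |φ|^p ≤ ∫_Ω |∇φ|^p`. Hence every quotient in the definition of
the torsional rigidity is at most `|Ω|^(p-1) / λ_p^D(Ω)`, and taking the `(p-1)`-th root gives the
inequality.
-/

lemma rpow_integral_le_integral_rpow_mul_measureReal_univ {α : Type*} [MeasurableSpace α]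
    {μ : Measure α} [IsFiniteMeasure μ] {p : ℝ} (hp : 1 < p) {f : α → ℝ} (hf0 : 0 ≤ᵐ[μ] f)
    (hf : MemLp f (ENNReal.ofReal p) μ) :
    (∫ x, f x ∂μ) ^ p ≤ (∫ x, f x ^ p ∂μ) * μ.real univ ^ (p - 1) := by
  have hq : p.HolderConjugate p.conjExponent := .conjExponent hp
  have holder := integral_mul_le_Lp_mul_Lq_of_nonneg hq hf0
    (Filter.Eventually.of_forall fun _ => zero_le_one) hf (memLp_const (1 : ℝ))
  simp only [mul_one, Real.one_rpow, integral_const, smul_eq_mul] at holder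
  have hI : 0 ≤ ∫ x, f x ^ p ∂μ :=
    integral_nonneg_of_ae (hf0.mono fun x hx => Real.rpow_nonneg hx p)
  calc (∫ x, f x ∂μ) ^ p
      ≤ ((∫ x, f x ^ p ∂μ) ^ (1 / p) * μ.real univ ^ (1 / p.conjExponent)) ^ p :=
        Real.rpow_le_rpow (integral_nonneg_of_ae hf0) holder (by linarith)
    _ = (∫ x, f x ^ p ∂μ) * μ.real univ ^ (p - 1) := by
        rw [Real.mul_rpow (by positivity) (by positivity), ← Real.rpow_mul hI,
          ← Real.rpow_mul measureReal_nonneg, one_div_mul_cancel (by linarith), Real.rpow_one,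
          one_div, inv_mul_eq_div, hq.div_conj_eq_sub_one]

lemma Real.sSup_mul_le {s : Set ℝ} {c a : ℝ} (h : ∀ r ∈ s, r * c ≤ a) (hc : 0 ≤ c)
    (ha : 0 ≤ a) : sSup s * c ≤ a := by
  rcases hc.eq_or_lt with rfl | hc
  · rwa [mul_zero]
  · rw [← le_div_iff₀ hc]
    exact Real.sSup_le (fun r hr => (le_div_iff₀ hc).mpr (h r hr)) (div_nonneg ha hc.le)

section

variable {N : ℕ} {Ω : Set (EuclideanSpace ℝ (Fin N))} {p : ℝ} {φ : EuclideanSpace ℝ (Fin N) → ℝ}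

lemma dirichletEig_nonneg : 0 ≤ dirichletEig N p Ω := by
  refine Real.sInf_nonneg ?_
  rintro _ ⟨φ, -, hC, rfl⟩
  exact div_nonneg (integral_nonneg fun x => Real.rpow_nonneg (norm_nonneg _) p) hC.le

lemma integral_abs_rpow_mul_dirichletEig_le (hφ : CcInf N Ω φ) :
    (∫ x in Ω, |φ x| ^ p) * dirichletEig N p Ω ≤ ∫ x in Ω, ‖gradient φ x‖ ^ p := by
  have hC : 0 ≤ ∫ x in Ω, |φ x| ^ p := integral_nonneg fun x => Real.rpow_nonneg (abs_nonneg _) p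
  rcases hC.eq_or_lt with hC | hC
  · rw [← hC, zero_mul]
    exact integral_nonneg fun x => Real.rpow_nonneg (norm_nonneg _) p
  · rw [mul_comm, ← le_div_iff₀ hC, dirichletEig]
    refine csInf_le ⟨0, ?_⟩ ⟨φ, hφ, hC, rfl⟩
    rintro _ ⟨ψ, -, hψ, rfl⟩
    exact div_nonneg (integral_nonneg fun x => Real.rpow_nonneg (norm_nonneg _) p) hψ.le

lemma torsion_quotient_mul_dirichletEig_le (hΩ : volume Ω ≠ ⊤) (hp : 1 < p)
    (hφ : CcInf N Ω φ) :
    (∫ x in Ω, |φ x|) ^ p / (∫ x in Ω, ‖gradient φ x‖ ^ p) * dirichletEig N p Ω ≤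
      vol N Ω ^ (p - 1) := by
  have : IsFiniteMeasure (volume.restrict Ω) := isFiniteMeasure_restrict.mpr hΩ
  have hholder := rpow_integral_le_integral_rpow_mul_measureReal_univ hp
    (Filter.Eventually.of_forall fun x => abs_nonneg (φ x))
    (hφ.1.continuous.abs.memLp_of_hasCompactSupport (μ := volume.restrict Ω) hφ.2.1.abs)
  rw [measureReal_restrict_apply_univ] at hholder
  have hV : 0 ≤ vol N Ω ^ (p - 1) := Real.rpow_nonneg ENNReal.toReal_nonneg _
  rw [div_mul_eq_mul_div]
  refine div_le_of_le_mul₀ (integral_nonneg fun x => Real.rpow_nonneg (norm_nonneg _) p) hV ?_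
  calc (∫ x in Ω, |φ x|) ^ p * dirichletEig N p Ω
      ≤ (∫ x in Ω, |φ x| ^ p) * vol N Ω ^ (p - 1) * dirichletEig N p Ω :=
        mul_le_mul_of_nonneg_right hholder dirichletEig_nonneg
    _ = vol N Ω ^ (p - 1) * ((∫ x in Ω, |φ x| ^ p) * dirichletEig N p Ω) := by ring
    _ ≤ vol N Ω ^ (p - 1) * ∫ x in Ω, ‖gradient φ x‖ ^ p :=
        mul_le_mul_of_nonneg_left (integral_abs_rpow_mul_dirichletEig_le hφ) hV

end

theorem stmt_15_general (N : ℕ) (Ω : Set (EuclideanSpace ℝ (Fin N)))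
    (hΩbdd : Bornology.IsBounded Ω)
    (p : ℝ) (hp : 1 < p) :
    pTorsion N p Ω * dirichletEig N p Ω ^ ((1 : ℝ) / (p - 1)) ≤ vol N Ω := by
  have hV : 0 ≤ vol N Ω := ENNReal.toReal_nonneg
  have hT : 0 ≤ sSup {r : ℝ | ∃ φ, CcInf N Ω φ ∧ (∃ x, φ x ≠ 0) ∧
      r = (∫ x in Ω, |φ x|) ^ p / ∫ x in Ω, ‖gradient φ x‖ ^ p} := by
    refine Real.sSup_nonneg ?_
    rintro _ ⟨φ, -, -, rfl⟩
    exact div_nonneg (Real.rpow_nonneg (integral_nonneg fun x => abs_nonneg _) p)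
      (integral_nonneg fun x => Real.rpow_nonneg (norm_nonneg _) p)
  rw [pTorsion, ← Real.mul_rpow hT dirichletEig_nonneg, one_div,
    Real.rpow_inv_le_iff_of_pos (mul_nonneg hT dirichletEig_nonneg) hV (sub_pos.mpr hp)]
  refine Real.sSup_mul_le ?_ dirichletEig_nonneg (by positivity)
  rintro _ ⟨φ, hφ, -, rfl⟩
  exact torsion_quotient_mul_dirichletEig_le hΩbdd.measure_lt_top.ne hp hφ

/-- Pólya-type inequality: `T_p(Ω) λ_p^D(Ω)^{1/(p-1)} ≤ |Ω|`. -/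
theorem stmt_15 (N : ℕ) (hN : 2 ≤ N) (Ω : Set (EuclideanSpace ℝ (Fin N)))
    (hΩopen : IsOpen Ω) (hΩbdd : Bornology.IsBounded Ω)
    (γ : ℝ) (hγ0 : 0 < γ) (hγ1 : γ < 1) (hΩreg : HasC1GammaBoundary N γ Ω)
    (p : ℝ) (hp : 1 < p) :
    pTorsion N p Ω * dirichletEig N p Ω ^ ((1 : ℝ) / (p - 1)) ≤ vol N Ω :=
  stmt_15_general N Ω hΩbdd p hp
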